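/- Let D be an (n,α,p)-pseudorandom digraph with p = ω((log n)^8/n), and let S_1, S_2 be disjoint vertex sets of equal size s with s·p = ω((log n)^{2.1}) such that every vertex v satisfies d^+(v,S_2) ≥ (1/2 + α/4)p·s and d^−(v,S_1) ≥ (1/2 + α/4)p·s. Then there exists a perfect matching from S_1 to S_2 using arcs of D directed from S_1 to S_2. -/

import Mathlib

/-!
By Hall's theorem it suffices that every `A ⊆ S₁` has at least `|A|` out-neighbours in `S₂`.
Suppose `N = N⁺(A) ∩ S₂` is smaller than `A`, and put `t = (1/2 + α/4) p s`. Every vertex of `A`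
sends at least `t` arcs into `N`, and every vertex of `S₂ \ N` receives at least `t` arcs from
`S₁ \ A`, which is no larger than `S₂ \ N`. For a pair `(X, Y)` with `|Y| ≤ |X|` and all
degrees from `X` into `Y` at least `t ≫ log^{2.1} n`, (P2) rules out `X` or `Y` being small
(of size `≲ log² n / p` resp. `log^{1.1} n / p`), and then (P3) gives `t ≤ (1 + α/2) |Y| p`,
i.e. `|Y| ≥ s/2`. Hence `|N| ≥ s/2` and `|S₁ \ A| ≥ s/2`, so `|A| ≤ s/2 ≤ |N| < |A|`.
-/

open Filter

def outDeg {n : ℕ} (D : Fin n → Fin n → Bool) (v : Fin n) (S : Finset (Fin n)) : ℕ :=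
  (S.filter fun w => D v w = true).card

def inDeg {n : ℕ} (D : Fin n → Fin n → Bool) (v : Fin n) (S : Finset (Fin n)) : ℕ :=
  (S.filter fun w => D w v = true).card

def arcsIn {n : ℕ} (D : Fin n → Fin n → Bool) (X : Finset (Fin n)) : ℕ :=
  ((X ×ˢ X).filter fun e => D e.1 e.2 = true).card

def arcsBetween {n : ℕ} (D : Fin n → Fin n → Bool) (X Y : Finset (Fin n)) : ℕ :=
  ((X ×ˢ Y).filter fun e => D e.1 e.2 = true).card

/-- An `(n, α, p)`-pseudorandom digraph, as in Definition 3.1 of the paper. -/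
def IsPseudorandom (n : ℕ) (α p : ℝ) (D : Fin n → Fin n → Bool) : Prop :=
  (∀ v : Fin n, (1/2 + 2*α) * n * p ≤ (outDeg D v Finset.univ : ℝ) ∧
    (1/2 + 2*α) * n * p ≤ (inDeg D v Finset.univ : ℝ)) ∧
  (∀ X : Finset (Fin n), (X.card : ℝ) ≤ (Real.log n)^2 / p →
    (arcsIn D X : ℝ) ≤ (X.card : ℝ) * (Real.log n) ^ (2.1 : ℝ)) ∧
  (∀ X Y : Finset (Fin n), Disjoint X Y →
    (Real.log n) ^ (1.1 : ℝ) / p ≤ (X.card : ℝ) →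
    (Real.log n) ^ (1.1 : ℝ) / p ≤ (Y.card : ℝ) →
    (arcsBetween D X Y : ℝ) ≤ (1 + α/2) * X.card * Y.card * p)

open Finset

section Digraph

variable {n : ℕ} (D : Fin n → Fin n → Bool)

lemma arcsBetween_eq_sum_outDeg (X Y : Finset (Fin n)) :
    arcsBetween D X Y = ∑ x ∈ X, outDeg D x Y := by
  simp only [arcsBetween, outDeg, card_filter, sum_product]

lemma arcsBetween_le_arcsIn (X Y : Finset (Fin n)) : arcsBetween D X Y ≤ arcsIn D (X ∪ Y) :=
  card_le_card (filter_subset_filter _ (product_subset_product subset_union_left subset_union_right))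

lemma outDeg_flip (v : Fin n) (S : Finset (Fin n)) : outDeg (flip D) v S = inDeg D v S := rfl

lemma arcsBetween_flip (X Y : Finset (Fin n)) : arcsBetween (flip D) X Y = arcsBetween D Y X := by
  rw [arcsBetween, arcsBetween, card_filter, card_filter, sum_product, sum_product, sum_comm]
  rfl

lemma arcsIn_flip (X : Finset (Fin n)) : arcsIn (flip D) X = arcsIn D X :=
  arcsBetween_flip D X X

lemma card_mul_le_arcsBetween {X Y : Finset (Fin n)} {t : ℝ}
    (hdeg : ∀ x ∈ X, t ≤ outDeg D x Y) : #X * t ≤ arcsBetween D X Y := by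
  rw [arcsBetween_eq_sum_outDeg]
  push_cast
  simpa using card_nsmul_le_sum X _ t hdeg

end Digraph

/-- Properties (P2) and (P3) of `IsPseudorandom`, stated separately so that they can be
transferred to the reverse digraph `flip D`. -/
def SparseOnSmallSets {n : ℕ} (p : ℝ) (D : Fin n → Fin n → Bool) : Prop :=
  ∀ X : Finset (Fin n), (#X : ℝ) ≤ (Real.log n) ^ 2 / p →
    (arcsIn D X : ℝ) ≤ #X * (Real.log n) ^ (2.1 : ℝ)

def SparseBetweenLargeSets {n : ℕ} (α p : ℝ) (D : Fin n → Fin n → Bool) : Prop :=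
  ∀ X Y : Finset (Fin n), Disjoint X Y →
    (Real.log n) ^ (1.1 : ℝ) / p ≤ #X → (Real.log n) ^ (1.1 : ℝ) / p ≤ #Y →
    (arcsBetween D X Y : ℝ) ≤ (1 + α / 2) * #X * #Y * p

section Sparse

variable {n : ℕ} {α p t : ℝ} {D : Fin n → Fin n → Bool} {X Y : Finset (Fin n)}

lemma IsPseudorandom.sparseOnSmallSets (hD : IsPseudorandom n α p D) : SparseOnSmallSets p D :=
  hD.2.1

lemma IsPseudorandom.sparseBetweenLargeSets (hD : IsPseudorandom n α p D) :
    SparseBetweenLargeSets α p D :=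
  hD.2.2

lemma SparseOnSmallSets.flip (hD : SparseOnSmallSets p D) : SparseOnSmallSets p (flip D) := by
  intro X hX
  rw [arcsIn_flip]
  exact hD X hX

lemma SparseBetweenLargeSets.flip (hD : SparseBetweenLargeSets α p D) :
    SparseBetweenLargeSets α p (flip D) := by
  intro X Y hXY hX hY
  rw [arcsBetween_flip, mul_right_comm _ (#X : ℝ)]
  exact hD Y X hXY.symm hY hX

lemma SparseOnSmallSets.le_of_forall_le_outDeg (hD : SparseOnSmallSets p D) (hX : X.Nonempty)
    (hYX : #Y ≤ #X) (hsmall : 2 * (#X : ℝ) ≤ (Real.log n) ^ 2 / p)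
    (hdeg : ∀ x ∈ X, t ≤ outDeg D x Y) : t ≤ 2 * (Real.log n) ^ (2.1 : ℝ) := by
  have hXY : (#(X ∪ Y) : ℝ) ≤ 2 * #X := by exact_mod_cast (card_union_le X Y).trans (by omega)
  have hL : 0 ≤ (Real.log n) ^ (2.1 : ℝ) := Real.rpow_nonneg (Real.log_natCast_nonneg n) _
  refine le_of_mul_le_mul_left ?_ (by exact_mod_cast hX.card_pos : (0 : ℝ) < #X)
  calc (#X : ℝ) * t ≤ arcsBetween D X Y := card_mul_le_arcsBetween D hdeg
    _ ≤ arcsIn D (X ∪ Y) := by exact_mod_cast arcsBetween_le_arcsIn D X Y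
    _ ≤ #(X ∪ Y) * (Real.log n) ^ (2.1 : ℝ) := hD _ (hXY.trans hsmall)
    _ ≤ #X * (2 * (Real.log n) ^ (2.1 : ℝ)) := by nlinarith

lemma le_of_forall_le_outDeg (hP2 : SparseOnSmallSets p D) (hP3 : SparseBetweenLargeSets α p D)
    (hgap : (Real.log n) ^ (1.1 : ℝ) / p + 1 ≤ (Real.log n) ^ 2 / (2 * p))
    (ht : 2 * (Real.log n) ^ (2.1 : ℝ) < t) (hXY : Disjoint X Y) (hX : X.Nonempty)
    (hYX : #Y ≤ #X) (hdeg : ∀ x ∈ X, t ≤ outDeg D x Y) : t ≤ (1 + α / 2) * #Y * p := by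
  set L := Real.log n
  have half : ∀ x : ℝ, 2 * x ≤ L ^ 2 / p ↔ x ≤ L ^ 2 / (2 * p) := fun x => by
    rw [mul_comm 2 p, ← div_div]
    constructor <;> intro h <;> linarith
  by_cases hXsmall : (#X : ℝ) ≤ L ^ 2 / (2 * p)
  · exact absurd (hP2.le_of_forall_le_outDeg hX hYX ((half _).2 hXsmall) hdeg) ht.not_ge
  push Not at hXsmall
  by_cases hYsmall : (#Y : ℝ) < L ^ (1.1 : ℝ) / p
  · -- (P2) applies to a subset of `X` of size `⌈L^{1.1}/p⌉`
    set m := ⌈L ^ (1.1 : ℝ) / p⌉₊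
    have hm : (m : ℝ) < L ^ (1.1 : ℝ) / p + 1 :=
      Nat.ceil_lt_add_one ((Nat.cast_nonneg _).trans hYsmall.le)
    have hYm : #Y < m := by exact_mod_cast hYsmall.trans_le (Nat.le_ceil _)
    obtain ⟨X', hX'X, hX'⟩ := exists_subset_card_eq
      (show m ≤ #X by exact_mod_cast (hm.trans_le hgap).le.trans hXsmall.le)
    have hX'ne : X'.Nonempty := card_pos.1 (hX' ▸ (Nat.zero_le _).trans_lt hYm)
    refine absurd (hP2.le_of_forall_le_outDeg hX'ne (hX' ▸ hYm.le) ((half _).2 ?_)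
      fun x hx => hdeg x (hX'X hx)) ht.not_ge
    rw [hX']
    exact (hm.trans_le hgap).le
  push Not at hYsmall
  have hX3 : L ^ (1.1 : ℝ) / p ≤ #X := by linarith
  refine le_of_mul_le_mul_left ?_ (by exact_mod_cast hX.card_pos : (0 : ℝ) < #X)
  calc (#X : ℝ) * t ≤ arcsBetween D X Y := card_mul_le_arcsBetween D hdeg
    _ ≤ (1 + α / 2) * #X * #Y * p := hP3 X Y hXY hX3 hYsmall
    _ = #X * ((1 + α / 2) * #Y * p) := by ring

end Sparse

section Hall

variable {α : Type*} {r : α → α → Bool}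

def outNeighbourhood (r : α → α → Bool) (A S : Finset α) : Finset α :=
  {w ∈ S | ∃ a ∈ A, r a w = true}

lemma mem_outNeighbourhood {A S : Finset α} {w : α} :
    w ∈ outNeighbourhood r A S ↔ w ∈ S ∧ ∃ a ∈ A, r a w = true :=
  mem_filter

lemma outNeighbourhood_subset (A S : Finset α) : outNeighbourhood r A S ⊆ S :=
  filter_subset _ _

lemma exists_bijOn_of_card_le_card_outNeighbourhood [DecidableEq α] {S₁ S₂ : Finset α}
    (hcard : #S₂ ≤ #S₁) (hall : ∀ A ⊆ S₁, #A ≤ #(outNeighbourhood r A S₂)) :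
    ∃ f : α → α, Set.BijOn f S₁ S₂ ∧ ∀ v ∈ S₁, r v (f v) = true := by
  obtain ⟨f₀, hf₀, hf₀r⟩ := (all_card_le_biUnion_card_iff_exists_injective
    fun a : S₁ => {w ∈ S₂ | r a w = true}).1 fun A => by
      convert hall (A.map (Function.Embedding.subtype _)) (by simp +contextual [subset_iff])
        using 2
      · simp
      · ext w
        simp only [mem_biUnion, mem_filter, mem_outNeighbourhood, Finset.mem_map,
          Function.Embedding.coe_subtype]
        aesop
  set f : α → α := fun v => if h : v ∈ S₁ then f₀ ⟨v, h⟩ else v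
  have hf : ∀ v ∈ S₁, f v ∈ S₂ ∧ r v (f v) = true := fun v hv => by
    simpa [f, hv] using hf₀r ⟨v, hv⟩
  have hinj : Set.InjOn f S₁ := fun v hv w hw hvw => by
    simp only [f, dif_pos (mem_coe.1 hv), dif_pos (mem_coe.1 hw)] at hvw
    simpa using hf₀ hvw
  have hmaps : Set.MapsTo f S₁ S₂ := fun v hv => (hf v hv).1
  exact ⟨f, ⟨hmaps, hinj, surjOn_of_injOn_of_card_le f hmaps hinj hcard⟩, fun v hv => (hf v hv).2⟩

end Hall

lemma card_le_card_outNeighbourhood {n : ℕ} {α p : ℝ} {D : Fin n → Fin n → Bool} {s : ℕ}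
    {S₁ S₂ : Finset (Fin n)} (hα : 0 < α) (hp : 0 < p) (hP2 : SparseOnSmallSets p D)
    (hP3 : SparseBetweenLargeSets α p D)
    (hgap : (Real.log n) ^ (1.1 : ℝ) / p + 1 ≤ (Real.log n) ^ 2 / (2 * p))
    (ht : 2 * (Real.log n) ^ (2.1 : ℝ) < (1 / 2 + α / 4) * p * s) (hdisj : Disjoint S₁ S₂)
    (hc₁ : #S₁ = s) (hc₂ : #S₂ = s)
    (hdeg : ∀ v, (1 / 2 + α / 4) * p * s ≤ (outDeg D v S₂ : ℝ) ∧
      (1 / 2 + α / 4) * p * s ≤ (inDeg D v S₁ : ℝ))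
    {A : Finset (Fin n)} (hA : A ⊆ S₁) : #A ≤ #(outNeighbourhood D A S₂) := by
  set N := outNeighbourhood D A S₂
  by_contra! hNA
  have hNS₂ : N ⊆ S₂ := outNeighbourhood_subset A S₂
  have hAs : #A ≤ s := hc₁ ▸ card_le_card hA
  have hNs : #N ≤ s := hc₂ ▸ card_le_card hNS₂
  have hB : #(S₂ \ N) = s - #N := by rw [card_sdiff_of_subset hNS₂, hc₂]
  have hSA : #(S₁ \ A) = s - #A := by rw [card_sdiff_of_subset hA, hc₁]
  have hout : ∀ a ∈ A, (1 / 2 + α / 4) * p * s ≤ (outDeg D a N : ℝ) := fun a ha =>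
    (hdeg a).1.trans <| by
      unfold outDeg
      exact_mod_cast card_le_card fun w hw => by
        simp only [N, mem_filter, mem_outNeighbourhood] at hw ⊢
        exact ⟨⟨hw.1, a, ha, hw.2⟩, hw.2⟩
  have hin : ∀ b ∈ S₂ \ N, (1 / 2 + α / 4) * p * s ≤ (outDeg (flip D) b (S₁ \ A) : ℝ) :=
    fun b hb => (hdeg b).2.trans <| by
      rw [outDeg_flip]
      unfold inDeg
      exact_mod_cast card_le_card fun w hw => by
        rw [mem_filter] at hw ⊢
        rw [Finset.mem_sdiff] at hb ⊢
        exact ⟨⟨hw.1, fun hwA => hb.2 (mem_outNeighbourhood.2 ⟨hb.1, w, hwA, hw.2⟩)⟩, hw.2⟩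
  have hN := le_of_forall_le_outDeg hP2 hP3 hgap ht (hdisj.mono hA hNS₂)
    (card_pos.1 (by omega)) hNA.le hout
  have hSA' := le_of_forall_le_outDeg hP2.flip hP3.flip hgap ht
    (hdisj.symm.mono sdiff_subset sdiff_subset) (card_pos.1 (by omega)) (by omega) hin
  have half_le : ∀ k : ℝ, (1 / 2 + α / 4) * p * s ≤ (1 + α / 2) * k * p → (s : ℝ) / 2 ≤ k :=
    fun k hk => le_of_mul_le_mul_left (by linarith) (by positivity : 0 < (1 + α / 2) * p)
  have hN_half := half_le _ hN
  have hSA_half := half_le _ hSA'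
  rw [hSA, Nat.cast_sub hAs] at hSA_half
  have : (#N : ℝ) < #A := by exact_mod_cast hNA
  linarith

lemma rpow_div_add_one_le_sq_div {x p : ℝ} (hx : 16 ≤ x) (hp : 0 < p) (hp1 : p ≤ 1) :
    x ^ (1.1 : ℝ) / p + 1 ≤ x ^ 2 / (2 * p) := by
  have hx1 : 1 ≤ x := by linarith
  have h09 : 4 ≤ x ^ (0.9 : ℝ) := calc
    (4 : ℝ) = √16 := by rw [show (16 : ℝ) = 4 ^ 2 by norm_num, Real.sqrt_sq zero_le_four]
    _ ≤ √x := Real.sqrt_le_sqrt hx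
    _ = x ^ (0.5 : ℝ) := by rw [Real.sqrt_eq_rpow]; norm_num
    _ ≤ x ^ (0.9 : ℝ) := Real.rpow_le_rpow_of_exponent_le hx1 (by norm_num)
  have h11 : 1 ≤ x ^ (1.1 : ℝ) := Real.one_le_rpow hx1 (by norm_num)
  have hsq : x ^ 2 = x ^ (1.1 : ℝ) * x ^ (0.9 : ℝ) := by
    rw [← Real.rpow_add (by linarith), ← Real.rpow_natCast]
    norm_num
  have hx2 : x ^ (1.1 : ℝ) + 1 ≤ x ^ 2 / 2 := by rw [hsq]; nlinarith
  have hinv : 1 ≤ 1 / p := by rwa [le_div_iff₀ hp, one_mul]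
  calc x ^ (1.1 : ℝ) / p + 1 ≤ (x ^ (1.1 : ℝ) + 1) / p := by rw [add_div]; linarith
    _ ≤ x ^ 2 / 2 / p := by gcongr
    _ = x ^ 2 / (2 * p) := by rw [div_div]

theorem stmt_13_general (α : ℝ) (hα : 0 < α) (p : ℕ → ℝ) (hp : ∀ n, 0 < p n ∧ p n < 1)
    (D : (n : ℕ) → Fin n → Fin n → Bool)
    (hD : ∀ n, IsPseudorandom n α (p n) (D n))
    (s : ℕ → ℕ) (S₁ S₂ : (n : ℕ) → Finset (Fin n))
    (hdisj : ∀ n, Disjoint (S₁ n) (S₂ n))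
    (hcard : ∀ n, (S₁ n).card = s n ∧ (S₂ n).card = s n)
    (hsp : Tendsto (fun n : ℕ => (s n : ℝ) * p n / (Real.log n) ^ (2.1 : ℝ)) atTop atTop)
    (hdeg : ∀ n, ∀ v : Fin n,
      (1/2 + α/4) * p n * s n ≤ (outDeg (D n) v (S₂ n) : ℝ) ∧
      (1/2 + α/4) * p n * s n ≤ (inDeg (D n) v (S₁ n) : ℝ)) :
    ∀ᶠ n in atTop, ∃ f : Fin n → Fin n,
      Set.BijOn f ↑(S₁ n) ↑(S₂ n) ∧ ∀ v ∈ S₁ n, D n v (f v) = true := by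
  have hlog : Tendsto (fun n : ℕ => Real.log n) atTop atTop :=
    Real.tendsto_log_atTop.comp tendsto_natCast_atTop_atTop
  filter_upwards [hlog.eventually_ge_atTop 16, hsp.eventually_ge_atTop 5] with n hL hsp5
  obtain ⟨hp₀, hp₁⟩ := hp n
  have hL21 : 0 < Real.log n ^ (2.1 : ℝ) := Real.rpow_pos_of_pos (by linarith) _
  have ht : 2 * Real.log n ^ (2.1 : ℝ) < (1 / 2 + α / 4) * p n * s n := by
    rw [le_div_iff₀ hL21] at hsp5
    nlinarith [mul_nonneg hα.le (mul_nonneg hp₀.le (Nat.cast_nonneg (s n) : (0 : ℝ) ≤ s n))]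
  exact exists_bijOn_of_card_le_card_outNeighbourhood ((hcard n).2.trans (hcard n).1.symm).le
    fun A hA => card_le_card_outNeighbourhood hα hp₀ (hD n).sparseOnSmallSets
      (hD n).sparseBetweenLargeSets (rpow_div_add_one_le_sq_div hL hp₀ hp₁.le) ht (hdisj n)
      (hcard n).1 (hcard n).2 (hdeg n) hA

/-- Claim 3.4: in a pseudorandom digraph with `p = ω(log^8 n / n)`, disjoint
equal-size sets `S₁, S₂` with `s p = ω(log^{2.1} n)` and good degrees between
them admit a perfect matching from `S₁` to `S₂`. -/
theorem stmt_13 (α : ℝ) (hα : 0 < α) (p : ℕ → ℝ) (hp : ∀ n, 0 < p n ∧ p n < 1)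
    (hω : Tendsto (fun n : ℕ => p n * n / (Real.log n) ^ 8) atTop atTop)
    (D : (n : ℕ) → Fin n → Fin n → Bool)
    (hD : ∀ n, IsPseudorandom n α (p n) (D n))
    (s : ℕ → ℕ) (S₁ S₂ : (n : ℕ) → Finset (Fin n))
    (hdisj : ∀ n, Disjoint (S₁ n) (S₂ n))
    (hcard : ∀ n, (S₁ n).card = s n ∧ (S₂ n).card = s n)
    (hsp : Tendsto (fun n : ℕ => (s n : ℝ) * p n / (Real.log n) ^ (2.1 : ℝ)) atTop atTop)
    (hdeg : ∀ n, ∀ v : Fin n,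
      (1/2 + α/4) * p n * s n ≤ (outDeg (D n) v (S₂ n) : ℝ) ∧
      (1/2 + α/4) * p n * s n ≤ (inDeg (D n) v (S₁ n) : ℝ)) :
    ∀ᶠ n in atTop, ∃ f : Fin n → Fin n,
      Set.BijOn f ↑(S₁ n) ↑(S₂ n) ∧ ∀ v ∈ S₁ n, D n v (f v) = true :=
  stmt_13_general α hα p hp D hD s S₁ S₂ hdisj hcard hsp hdeg
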